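/- arXiv:1910.00924 — 7 statements merged into one kernel-verified Lean document; each statement's English description precedes it below -/
import Mathlib

section
/- The set {0,1,2} is extreme in ZMod 4: the function f with f(0)=1, f(1)=e^{3πi/4}, f(2)=i, f(3)=0 satisfies |f(x)|=1 on {0,1,2} and ∑_x f(x)·conj(f(x−d)) = 0 for every nonzero d ∈ ZMod 4. Equivalently, its Fourier transform has |f̂(k)| = √3 for all k. -/
open Complex
open scoped ComplexConjugate

/-!
Write `ω = exp (3πi/4)`. For `d = 1` the autocorrelation of `f = (1, ω, i, 0)` is `ω + i·conj ω`,
which vanishes because `i·conj ω = exp (-πi/4) = -ω`; for `d = 2` it is `conj i + i = 0`; and the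
autocorrelation at `-d` is the conjugate of the one at `d`, which covers `d = 3`.
-/

section Autocorrelation

variable {G : Type*} [AddGroup G] [Fintype G]

def autocorrelation (f : G → ℂ) (d : G) : ℂ := ∑ x, f x * conj (f (x - d))

lemma autocorrelation_neg (f : G → ℂ) (d : G) :
    autocorrelation f (-d) = conj (autocorrelation f d) := by
  simp only [autocorrelation, map_sum, map_mul, conj_conj]
  exact Fintype.sum_equiv (Equiv.addRight d) _ _ fun x => by simp [mul_comm]

end Autocorrelation

-- `ZMod 4` is `Fin 4` by definition, and the shifts `x - d` reduce by computation.
lemma autocorrelation_one_zmod_four (f : ZMod 4 → ℂ) :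
    autocorrelation f 1 =
      f 0 * conj (f 3) + f 1 * conj (f 0) + f 2 * conj (f 1) + f 3 * conj (f 2) :=
  Fin.sum_univ_four _

lemma autocorrelation_two_zmod_four (f : ZMod 4 → ℂ) :
    autocorrelation f 2 =
      f 0 * conj (f 2) + f 1 * conj (f 3) + f 2 * conj (f 0) + f 3 * conj (f 1) :=
  Fin.sum_univ_four _

lemma I_mul_conj_exp_three_pi_div_four_mul_I :
    I * conj (exp ((3 * Real.pi / 4 : ℝ) * I)) = -exp ((3 * Real.pi / 4 : ℝ) * I) :=
  calc I * conj (exp ((3 * Real.pi / 4 : ℝ) * I))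
      = exp (Real.pi / 2 * I) * exp (-((3 * Real.pi / 4 : ℝ) * I)) := by
        rw [exp_pi_div_two_mul_I, ← exp_conj, map_mul, conj_ofReal, conj_I, mul_neg]
    _ = exp ((3 * Real.pi / 4 : ℝ) * I) * exp (-(Real.pi * I)) := by
        rw [← exp_add, ← exp_add]; push_cast; ring_nf
    _ = -exp ((3 * Real.pi / 4 : ℝ) * I) := by rw [exp_neg, exp_pi_mul_I]; ring

theorem extreme_012_zmod4 :
    ∀ f : ZMod 4 → ℂ,
      f 0 = 1 → f 1 = Complex.exp ((3 * Real.pi / 4 : ℝ) * Complex.I) →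
      f 2 = Complex.I → f 3 = 0 →
      (∀ x ∈ ({0, 1, 2} : Finset (ZMod 4)), ‖f x‖ = 1) ∧
      ∀ d : ZMod 4, d ≠ 0 →
        ∑ x : ZMod 4, f x * (starRingEnd ℂ) (f (x - d)) = 0 := by
  intro f h0 h1 h2 h3
  have hA1 : autocorrelation f 1 = 0 := by
    rw [autocorrelation_one_zmod_four, h0, h1, h2, h3, I_mul_conj_exp_three_pi_div_four_mul_I]
    simp
  have hA2 : autocorrelation f 2 = 0 := by
    rw [autocorrelation_two_zmod_four, h0, h2, h3]
    simp
  have hA3 : autocorrelation f 3 = 0 := by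
    rw [show (3 : ZMod 4) = -1 from rfl, autocorrelation_neg, hA1, map_zero]
  refine ⟨?_, fun d hd => ?_⟩
  · intro x hx
    fin_cases hx
    · simp [h0]
    · rw [h1]; exact norm_exp_ofReal_mul_I _
    · simp [h2]
  · change autocorrelation f d = 0
    fin_cases d
    exacts [absurd rfl hd, hA1, hA2, hA3]
end

section
/- Every extreme measure on {0,1,2} ⊂ ZMod 4 with coefficient 1 at 0 has the form δ_0 + a·δ_1 + i·ε·δ_2 where ε = ±1 and a ∈ {±e^{3πi/4}} (when ε = 1) or a ∈ {±e^{πi/4}} (when ε = −1). In particular, if f(0)=1, |f(1)|=|f(2)|=1, and f has zero autocorrelation at all nonzero shifts in ZMod 4, then f(2) = ±i. -/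
/-!
The shift-1 autocorrelation reads `f 1 + f 2 * conj (f 1) = 0`, i.e. `f 2 = -(f 1) ^ 2` since
`|f 1| = 1`; the shift-2 one reads `f 2 + conj (f 2) = 0`. So `f 2` is a purely imaginary unit,
`f 2 = ±i`, and `f 1` is one of the two square roots of `∓i`.
-/

open Complex Finset ComplexConjugate

theorem ZMod.sum_univ_four {M : Type*} [AddCommMonoid M] (g : ZMod 4 → M) :
    ∑ x, g x = g 0 + g 1 + g 2 + g 3 :=
  Fin.sum_univ_four g

namespace Complex

theorem mul_conj_eq_one_of_norm_eq_one {z : ℂ} (hz : ‖z‖ = 1) : z * conj z = 1 := by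
  rw [mul_conj', hz, ofReal_one, one_pow]

theorem eq_neg_sq_of_add_mul_conj_eq_zero {a b : ℂ} (ha : ‖a‖ = 1)
    (h : a + b * conj a = 0) : b = -a ^ 2 := by
  linear_combination a * h - b * mul_conj_eq_one_of_norm_eq_one ha

theorem eq_I_or_eq_neg_I_of_add_conj_eq_zero {z : ℂ} (hz : ‖z‖ = 1) (h : z + conj z = 0) :
    z = I ∨ z = -I :=
  sq_eq_sq_iff_eq_or_eq_neg.mp <| by
    linear_combination z * h - mul_conj_eq_one_of_norm_eq_one hz - I_sq

theorem exp_pi_div_four_mul_I_sq : exp ((Real.pi / 4 : ℝ) * I) ^ 2 = I := by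
  have : ((2 : ℕ) : ℂ) * ((Real.pi / 4 : ℝ) * I) = Real.pi / 2 * I := by
    push_cast
    ring
  rw [← exp_nat_mul, this, exp_pi_div_two_mul_I]

theorem exp_three_pi_div_four_mul_I_sq : exp ((3 * Real.pi / 4 : ℝ) * I) ^ 2 = -I := by
  have : ((2 : ℕ) : ℂ) * ((3 * Real.pi / 4 : ℝ) * I) = Real.pi / 2 * I + Real.pi * I := by
    push_cast
    ring
  rw [← exp_nat_mul, this, exp_add, exp_pi_div_two_mul_I, exp_pi_mul_I, mul_neg_one]

end Complex

theorem extreme_measures_012_zmod4_classified_general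
    (f : ZMod 4 → ℂ)
    (h0 : f 0 = 1) (h1 : ‖f 1‖ = 1)
    (h3 : f 3 = 0)
    (hext : ∀ d : ZMod 4, d ≠ 0 →
      ∑ x : ZMod 4, f x * (starRingEnd ℂ) (f (x - d)) = 0) :
    (f 2 = Complex.I ∧
        (f 1 = Complex.exp ((3 * Real.pi / 4 : ℝ) * Complex.I) ∨
         f 1 = -Complex.exp ((3 * Real.pi / 4 : ℝ) * Complex.I))) ∨
    (f 2 = -Complex.I ∧
        (f 1 = Complex.exp ((Real.pi / 4 : ℝ) * Complex.I) ∨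
         f 1 = -Complex.exp ((Real.pi / 4 : ℝ) * Complex.I))) := by
  have shift_one := hext 1 (by decide)
  rw [ZMod.sum_univ_four] at shift_one
  change f 0 * conj (f 3) + f 1 * conj (f 0) + f 2 * conj (f 1) + f 3 * conj (f 2) = 0
    at shift_one
  have shift_two := hext 2 (by decide)
  rw [ZMod.sum_univ_four] at shift_two
  change f 0 * conj (f 2) + f 1 * conj (f 3) + f 2 * conj (f 0) + f 3 * conj (f 1) = 0
    at shift_two
  have hf2 : f 2 = -f 1 ^ 2 :=
    eq_neg_sq_of_add_mul_conj_eq_zero h1 (by simpa [h0, h3] using shift_one)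
  have hf2_norm : ‖f 2‖ = 1 := by rw [hf2, norm_neg, norm_pow, h1, one_pow]
  rcases eq_I_or_eq_neg_I_of_add_conj_eq_zero hf2_norm
      (by simpa [h0, h3, add_comm] using shift_two) with hI | hI
  · refine .inl ⟨hI, sq_eq_sq_iff_eq_or_eq_neg.mp ?_⟩
    rw [exp_three_pi_div_four_mul_I_sq]
    linear_combination hf2 - hI
  · refine .inr ⟨hI, sq_eq_sq_iff_eq_or_eq_neg.mp ?_⟩
    rw [exp_pi_div_four_mul_I_sq]
    linear_combination hf2 - hI

theorem extreme_measures_012_zmod4_classified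
    (f : ZMod 4 → ℂ)
    (h0 : f 0 = 1) (h1 : ‖f 1‖ = 1) (h2 : ‖f 2‖ = 1)
    (h3 : f 3 = 0)
    (hext : ∀ d : ZMod 4, d ≠ 0 →
      ∑ x : ZMod 4, f x * (starRingEnd ℂ) (f (x - d)) = 0) :
    (f 2 = Complex.I ∧
        (f 1 = Complex.exp ((3 * Real.pi / 4 : ℝ) * Complex.I) ∨
         f 1 = -Complex.exp ((3 * Real.pi / 4 : ℝ) * Complex.I))) ∨
    (f 2 = -Complex.I ∧
        (f 1 = Complex.exp ((Real.pi / 4 : ℝ) * Complex.I) ∨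
         f 1 = -Complex.exp ((Real.pi / 4 : ℝ) * Complex.I))) :=
  extreme_measures_012_zmod4_classified_general f h0 h1 h3 hext
end

section
/- Let k ≥ 3 and let E = {0, a, b} be a three-element extreme subset of ZMod k. Then either E is a subgroup of ZMod k, or E is a three-element subset of a four-element subgroup of ZMod k. -/
/-!
If `d ≠ 0` is a difference `x - (x - d)` of elements of an extreme set `E` in exactly one way,
the autocorrelation of `f` at `d` reduces to the single unimodular term
`f x * conj (f (x - d))`, which cannot vanish. For `E = {0, a, b}` this forces each of the
differences `a`, `b`, `a - b` to coincide with another difference of `E`, and solving these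
coincidences in a cyclic group (which has at most one element of order two) shows that `a` and
`b` lie in the cyclic subgroup generated by an element of order `3` or `4`.
-/

open Complex Finset

/-- A finite subset `E` of `ZMod k` is extreme if there is a function supported
on `E`, unimodular on `E`, with vanishing autocorrelation at nonzero shifts. -/
def IsExtremeSet {k : ℕ} [NeZero k] (E : Finset (ZMod k)) : Prop :=
  ∃ f : ZMod k → ℂ,
    (∀ x ∈ E, ‖f x‖ = 1) ∧ (∀ x ∉ E, f x = 0) ∧
    ∀ d : ZMod k, d ≠ 0 → ∑ x : ZMod k, f x * (starRingEnd ℂ) (f (x - d)) = 0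

namespace IsExtremeSet

variable {k : ℕ} [NeZero k] {E : Finset (ZMod k)}

theorem exists_ne_of_sub_mem (hE : IsExtremeSet E) {d x : ZMod k} (hd : d ≠ 0)
    (hx : x ∈ E) (hxd : x - d ∈ E) : ∃ y ∈ E, y - d ∈ E ∧ y ≠ x := by
  obtain ⟨f, hf_norm, hf_supp, hf_corr⟩ := hE
  by_contra! hunique
  have hterm : ∀ y, y ≠ x → f y * starRingEnd ℂ (f (y - d)) = 0 := by
    intro y hy
    by_cases hyE : y ∈ E
    · by_cases hydE : y - d ∈ E
      · exact absurd (hunique y hyE hydE) hy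
      · simp [hf_supp _ hydE]
    · simp [hf_supp _ hyE]
  have hcorr := hf_corr d hd
  rw [sum_eq_single x (fun y _ hy => hterm y hy) (by simp)] at hcorr
  have hnorm : ‖f x * starRingEnd ℂ (f (x - d))‖ = 1 := by
    simp [hf_norm x hx, hf_norm _ hxd]
  simp [hcorr] at hnorm

theorem sub_eq_of_triple {x y z : ZMod k} (hE : IsExtremeSet {x, y, z}) (hxy : x ≠ y)
    (hyz : y ≠ z) : y - x = x - y ∨ y - x = x - z ∨ y - x = z - y := by
  obtain ⟨w, hw, hwd, hwy⟩ :=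
    hE.exists_ne_of_sub_mem (x := y) (sub_ne_zero.mpr hxy.symm) (by simp) (by simp)
  simp only [mem_insert, mem_singleton] at hw hwd
  rcases hw with rfl | rfl | rfl
  · rcases hwd with h | h | h
    · exact absurd (by linear_combination -h) hxy.symm
    · exact Or.inl (by linear_combination -h)
    · exact Or.inr (Or.inl (by linear_combination -h))
  · exact absurd rfl hwy
  · rcases hwd with h | h | h
    · exact absurd (by linear_combination -h) hyz
    · exact Or.inr (Or.inr (by linear_combination -h))
    · exact absurd (by linear_combination -h) hxy.symm

end IsExtremeSet

theorem addOrderOf_eq_four {M : Type*} [AddMonoid M] {c : M} (h2 : 2 • c ≠ 0) (h4 : 4 • c = 0) :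
    addOrderOf c = 4 :=
  addOrderOf_eq_prime_pow (p := 2) (n := 1) (by simpa using h2) (by simpa using h4)

section Cyclic

variable {G : Type*} [AddCommGroup G] [Finite G] [IsAddCyclic G]

theorem IsAddCyclic.eq_of_two_nsmul_eq_zero {a b : G} (ha : a ≠ 0) (hb : b ≠ 0)
    (ha2 : 2 • a = 0) (hb2 : 2 • b = 0) : a = b := by
  classical
  have := Fintype.ofFinite G
  by_contra hab
  have hsub : ({0, a, b} : Finset G) ⊆ ({x | 2 • x = 0} : Finset G) := by
    intro x hx
    simp only [mem_insert, mem_singleton] at hx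
    rcases hx with rfl | rfl | rfl <;> simp [ha2, hb2]
  have hcard := (card_le_card hsub).trans (IsAddCyclic.card_nsmul_eq_zero_le two_pos)
  rw [card_insert_of_notMem (by simp [ha.symm, hb.symm]), card_pair hab] at hcard
  omega

open AddSubgroup in
theorem IsAddCyclic.exists_addOrderOf_eq_three_or_four {a b : G} (ha : a ≠ 0) (hb : b ≠ 0)
    (hab : a ≠ b) (h₁ : a = -a ∨ a = -b ∨ a = b - a) (h₂ : b = -b ∨ b = -a ∨ b = a - b)
    (h₃ : b - a = a - b ∨ b - a = a ∨ b - a = -b) :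
    ∃ c : G, (addOrderOf c = 3 ∨ addOrderOf c = 4) ∧ a ∈ zmultiples c ∧ b ∈ zmultiples c := by
  have hneg := neg_mem (mem_zmultiples a)
  have htwice := nsmul_mem (mem_zmultiples a) 2
  rcases h₁ with h₁ | h₁ | h₁
  · rcases h₂ with h₂ | h₂ | h₂
    · exact absurd (eq_of_two_nsmul_eq_zero ha hb (by linear_combination (norm := module) h₁)
        (by linear_combination (norm := module) h₂)) hab
    · exact absurd (by linear_combination (norm := module) h₁ - h₂) hab
    · have hab2 : a = 2 • b := by linear_combination (norm := module) -h₂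
      refine ⟨b, Or.inr (addOrderOf_eq_four (hab2 ▸ ha) ?_),
        hab2 ▸ nsmul_mem (mem_zmultiples b) 2, mem_zmultiples b⟩
      linear_combination (norm := module) h₁ - 2 • hab2
  · have hba : b = -a := by linear_combination (norm := module) h₁
    refine ⟨a, ?_, mem_zmultiples a, hba ▸ hneg⟩
    rcases h₃ with h₃ | h₃ | h₃
    · refine Or.inr (addOrderOf_eq_four (fun h => hab ?_) ?_)
      · linear_combination (norm := module) h - hba
      · linear_combination (norm := module) 2 • hba - h₃
    · exact Or.inl (addOrderOf_eq_prime (by linear_combination (norm := module) hba - h₃) ha)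
    · exact Or.inl (addOrderOf_eq_prime (by linear_combination (norm := module) 2 • hba - h₃) ha)
  · have hba : b = 2 • a := by linear_combination (norm := module) -h₁
    refine ⟨a, ?_, mem_zmultiples a, hba ▸ htwice⟩
    rcases h₂ with h₂ | h₂ | h₂
    · exact Or.inr (addOrderOf_eq_four (hba ▸ hb)
        (by linear_combination (norm := module) h₂ - 2 • hba))
    · exact Or.inl (addOrderOf_eq_prime (by linear_combination (norm := module) h₂ - hba) ha)
    · exact Or.inl (addOrderOf_eq_prime (by linear_combination (norm := module) h₂ - 2 • hba) ha)

end Cyclic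

theorem three_element_extreme_sets_general (k : ℕ) [NeZero k]
    (a b : ZMod k) (E : Finset (ZMod k)) (hE : E = {0, a, b})
    (hcard : E.card = 3) (hext : IsExtremeSet E) :
    (∃ H : AddSubgroup (ZMod k), (E : Set (ZMod k)) = (H : Set (ZMod k))) ∨
    (∃ H : AddSubgroup (ZMod k), Nat.card H = 4 ∧
      (E : Set (ZMod k)) ⊆ (H : Set (ZMod k))) := by
  subst hE
  obtain ⟨ha, hb, hab⟩ : a ≠ 0 ∧ b ≠ 0 ∧ a ≠ b := by
    refine ⟨?_, ?_, ?_⟩ <;> rintro rfl <;>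
      simp only [mem_insert, mem_singleton, true_or, or_true, insert_eq_of_mem] at hcard <;>
      exact absurd hcard (card_le_two.trans_lt (by norm_num)).ne
  have h₁ := hext.sub_eq_of_triple ha.symm hab
  have h₂ := (pair_comm a b ▸ hext).sub_eq_of_triple hb.symm hab.symm
  have h₃ := ((by rw [insert_comm, pair_comm] : ({0, a, b} : Finset (ZMod k)) = {a, b, 0}) ▸
    hext).sub_eq_of_triple hab hb
  simp only [sub_zero, zero_sub] at h₁ h₂ h₃
  obtain ⟨c, hc, hac, hbc⟩ := IsAddCyclic.exists_addOrderOf_eq_three_or_four ha hb hab h₁ h₂ h₃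
  rw [← Nat.card_zmultiples] at hc
  have hsub : (({0, a, b} : Finset (ZMod k)) : Set (ZMod k)) ⊆ AddSubgroup.zmultiples c := by
    simp only [coe_insert, coe_singleton, Set.insert_subset_iff, Set.singleton_subset_iff]
    exact ⟨zero_mem _, hac, hbc⟩
  rcases hc with hc | hc
  · refine Or.inl ⟨_, Set.eq_of_subset_of_ncard_le hsub ?_⟩
    rw [← Nat.card_coe_set_eq, SetLike.coe_sort_coe, hc, Set.ncard_coe_finset, hcard]
  · exact Or.inr ⟨_, hc, hsub⟩

theorem three_element_extreme_sets (k : ℕ) [NeZero k] (hk : 3 ≤ k)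
    (a b : ZMod k) (E : Finset (ZMod k)) (hE : E = {0, a, b})
    (hcard : E.card = 3) (hext : IsExtremeSet E) :
    (∃ H : AddSubgroup (ZMod k), (E : Set (ZMod k)) = (H : Set (ZMod k))) ∨
    (∃ H : AddSubgroup (ZMod k), Nat.card H = 4 ∧
      (E : Set (ZMod k)) ⊆ (H : Set (ZMod k))) :=
  three_element_extreme_sets_general k a b E hE hcard hext
end

section
/- The set {0,1,2,3} is extreme in ZMod 5: the function f with f(0)=1, f(1)=f(2)=e^{2πi/3}, f(3)=1, f(4)=0 satisfies ∑_x f(x)·conj(f(x−d)) = 0 for every nonzero d ∈ ZMod 5. -/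
/-!
Write `ω = e^{2πi/3}`, so `ω conj ω = 1` and `1 + ω + conj ω = 0`. For each shift `d ∈ {1, 2}` the
three surviving products of the autocorrelation are `1`, `ω` and `conj ω` in some order, so they
cancel; the shifts `-1, -2` follow because the autocorrelation at `-d` is the conjugate of that
at `d`.
-/

open Complex Finset
open scoped ComplexConjugate

theorem autocorrelation_neg_s7 {G : Type*} [AddCommGroup G] [Fintype G] (f : G → ℂ) (d : G) :
    ∑ x, f x * conj (f (x - -d)) = conj (∑ x, f x * conj (f (x - d))) := by
  rw [map_sum]
  refine Fintype.sum_equiv (Equiv.addRight d) _ _ fun x => ?_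
  rw [Equiv.coe_addRight, map_mul, conj_conj, add_sub_cancel_right, sub_neg_eq_add, mul_comm]

theorem exp_ofReal_mul_I_mul_conj (θ : ℝ) : exp (θ * I) * conj (exp (θ * I)) = 1 := by
  rw [mul_conj, normSq_eq_norm_sq, norm_exp_ofReal_mul_I, one_pow, ofReal_one]

theorem one_add_exp_two_pi_div_three_add_conj :
    1 + exp ((2 * Real.pi / 3 : ℝ) * I) + conj (exp ((2 * Real.pi / 3 : ℝ) * I)) = 0 := by
  have hcos : Real.cos (2 * Real.pi / 3) = -(1 / 2) := by
    rw [show 2 * Real.pi / 3 = Real.pi - Real.pi / 3 by ring, Real.cos_pi_sub,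
      Real.cos_pi_div_three]
  rw [add_assoc, add_conj, exp_ofReal_mul_I_re, hcos]
  push_cast
  ring

theorem sum_zmod_five {M : Type*} [AddCommMonoid M] (g : ZMod 5 → M) :
    ∑ x, g x = g 0 + g 1 + g 2 + g 3 + g 4 :=
  Fin.sum_univ_five g

theorem extreme_0123_zmod5 :
    ∀ f : ZMod 5 → ℂ,
      f 0 = 1 → f 1 = Complex.exp ((2 * Real.pi / 3 : ℝ) * Complex.I) →
      f 2 = Complex.exp ((2 * Real.pi / 3 : ℝ) * Complex.I) →
      f 3 = 1 → f 4 = 0 →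
      ∀ d : ZMod 5, d ≠ 0 →
        ∑ x : ZMod 5, f x * (starRingEnd ℂ) (f (x - d)) = 0 := by
  intro f h0 h1 h2 h3 h4
  have hω_unit := exp_ofReal_mul_I_mul_conj (2 * Real.pi / 3)
  have hω_sum := one_add_exp_two_pi_div_three_add_conj
  have shift_one : ∑ x : ZMod 5, f x * conj (f (x - 1)) = 0 := by
    simp only [sum_zmod_five]
    reduce_mod_char
    simp only [h0, h1, h2, h3, h4, map_one, map_zero]
    linear_combination hω_unit + hω_sum
  have shift_two : ∑ x : ZMod 5, f x * conj (f (x - 2)) = 0 := by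
    simp only [sum_zmod_five]
    reduce_mod_char
    simp only [h0, h1, h2, h3, h4, map_one, map_zero]
    linear_combination hω_sum
  intro d hd
  obtain rfl | rfl | rfl | rfl : d = 1 ∨ d = 2 ∨ d = -2 ∨ d = -1 := by revert d; decide
  · exact shift_one
  · exact shift_two
  · rw [autocorrelation_neg_s7, shift_two, map_zero]
  · rw [autocorrelation_neg_s7, shift_one, map_zero]
end

section
/- The set {0,2,3,4,7} is extreme in ZMod 12: the function f with values 1, e^{3πi/2}, e^{5πi/4}, 1, e^{πi/4} at 0, 2, 3, 4, 7 respectively (and 0 elsewhere) satisfies ∑_x f(x)·conj(f(x−d)) = 0 for every nonzero d ∈ ZMod 12. -/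
/-!
On its support `{0, 2, 3, 4, 7}` the function `f` takes values in the eighth roots of unity,
`f x = ψ (k x)` for the standard character `ψ` of `ZMod 8` and a phase map `k`. The
autocorrelation at `d` is then the sum of `ψ` over the multiset of phase differences
`k x - k (x - d)`, taken over the pairs of support points at distance `d`. For every `d ≠ 0` this
multiset is invariant under translation by `4`, so its terms cancel in pairs because `ψ 4 = -1`.
-/

open Complex Finset

section PhaseDifferences

variable {G A : Type*} [AddCommGroup G] [AddCommGroup A]

theorem AddChar.sum_map_eq_zero_of_map_add_eq {R : Type*} [CommRing R] [NoZeroDivisors R]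
    (ψ : AddChar A R) {a : A} (hψa : ψ a ≠ 1) {m : Multiset A} (hm : m.map (· + a) = m) :
    (m.map ψ).sum = 0 := by
  have hshift : (m.map ψ).sum = ψ a * (m.map ψ).sum :=
    calc (m.map ψ).sum = ((m.map (· + a)).map ψ).sum := by rw [hm]
      _ = ψ a * (m.map ψ).sum := by
        simp only [Multiset.map_map, Function.comp_def, AddChar.map_add_eq_mul, mul_comm _ (ψ a),
          Multiset.sum_map_mul_left]
  have hmul : (1 - ψ a) * (m.map ψ).sum = 0 := by linear_combination hshift
  exact (mul_eq_zero.1 hmul).resolve_left (sub_ne_zero.2 hψa.symm)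

variable [DecidableEq G]

def phaseDifferences (S : Finset G) (k : G → A) (d : G) : Multiset A :=
  (S.filter (· - d ∈ S)).val.map fun x => k x - k (x - d)

theorem sum_mul_conj_sub_eq_sum_phaseDifferences [Fintype G] [Finite A] {K : Type*} [RCLike K]
    (ψ : AddChar A K) {S : Finset G} (k : G → A) {f : G → K} (hS : ∀ x ∈ S, f x = ψ (k x))
    (hSc : ∀ x ∉ S, f x = 0) (d : G) :
    ∑ x, f x * starRingEnd K (f (x - d)) = ((phaseDifferences S k d).map ψ).sum := by
  rw [phaseDifferences, Multiset.map_map, ← Finset.sum_eq_multiset_sum, Finset.sum_filter,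
    ← Finset.sum_subset (Finset.subset_univ S) fun x _ hx => by simp [hSc x hx]]
  refine Finset.sum_congr rfl fun x hx => ?_
  by_cases hxd : x - d ∈ S
  · rw [if_pos hxd, hS x hx, hS _ hxd, ← AddChar.map_neg_eq_conj, ← AddChar.map_add_eq_mul,
      ← sub_eq_add_neg, Function.comp_apply]
  · rw [if_neg hxd, hSc _ hxd, map_zero, mul_zero]

end PhaseDifferences

theorem ZMod.stdAddChar_eight_natCast (n : ℕ) {x : ℝ} (hx : n * Real.pi / 4 = x) :
    ZMod.stdAddChar (n : ZMod 8) = exp (x * I) := by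
  rw [← Int.cast_natCast, ZMod.stdAddChar_coe, ← hx]
  congr 1
  push_cast
  ring

-- `f x = exp (π i · phase x / 4)` on the support.
def phase : ZMod 12 → ZMod 8 := ![0, 0, 6, 5, 0, 0, 0, 1, 0, 0, 0, 0]

theorem phaseDifferences_map_add_four {d : ZMod 12} (hd : d ≠ 0) :
    (phaseDifferences {0, 2, 3, 4, 7} phase d).map (· + 4) =
      phaseDifferences {0, 2, 3, 4, 7} phase d := by
  revert d
  decide

theorem extreme_02347_zmod12 :
    ∀ f : ZMod 12 → ℂ,
      f 0 = 1 → f 2 = Complex.exp ((3 * Real.pi / 2 : ℝ) * Complex.I) →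
      f 3 = Complex.exp ((5 * Real.pi / 4 : ℝ) * Complex.I) →
      f 4 = 1 → f 7 = Complex.exp ((Real.pi / 4 : ℝ) * Complex.I) →
      (∀ x : ZMod 12, x ∉ ({0, 2, 3, 4, 7} : Finset (ZMod 12)) → f x = 0) →
      ∀ d : ZMod 12, d ≠ 0 →
        ∑ x : ZMod 12, f x * (starRingEnd ℂ) (f (x - d)) = 0 := by
  intro f h0 h2 h3 h4 h7 hSc d hd
  have hS : ∀ x ∈ ({0, 2, 3, 4, 7} : Finset (ZMod 12)), f x = ZMod.stdAddChar (phase x) := by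
    intro x hx
    simp only [mem_insert, mem_singleton] at hx
    rcases hx with rfl | rfl | rfl | rfl | rfl
    · exact h0.trans (AddChar.map_zero_eq_one _).symm
    · exact h2.trans (ZMod.stdAddChar_eight_natCast 6 (by ring)).symm
    · exact h3.trans (ZMod.stdAddChar_eight_natCast 5 (by ring)).symm
    · exact h4.trans (AddChar.map_zero_eq_one _).symm
    · exact h7.trans (ZMod.stdAddChar_eight_natCast 1 (by ring)).symm
  have hψ : ZMod.stdAddChar (4 : ZMod 8) ≠ 1 := by
    rw [← AddChar.map_zero_eq_one (ZMod.stdAddChar (N := 8)), ZMod.injective_stdAddChar.ne_iff]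
    decide
  rw [sum_mul_conj_sub_eq_sum_phaseDifferences _ phase hS hSc]
  exact AddChar.sum_map_eq_zero_of_map_add_eq _ hψ (phaseDifferences_map_add_four hd)
end

section
/- The set {0,1,2,3,4,7} is extreme in ZMod 10: the function f with values 1, e^{5πi/6}, e^{2πi/3}, e^{5πi/6}, 1, e^{πi/6} at 0,1,2,3,4,7 respectively (and 0 elsewhere) has zero autocorrelation at every nonzero shift in ZMod 10. -/
/-!
All nonzero values of `f` are twelfth roots of unity, which in Cartesian form are
`(-√3 + i)/2`, `(-1 + √3 i)/2` and `(√3 + i)/2`. Each of the nine autocorrelations is then a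
polynomial in `√3` and `i` that vanishes once `√3 ^ 2 = 3` and `i ^ 2 = -1` are used.
-/

open Complex
open scoped Real ComplexConjugate

theorem ZMod.sum_univ_ten {M : Type*} [AddCommMonoid M] (g : ZMod 10 → M) :
    ∑ x, g x = g 0 + g 1 + g 2 + g 3 + g 4 + g 5 + g 6 + g 7 + g 8 + g 9 := by
  have hfin : ∀ v : Fin 10 → M,
      ∑ i, v i = v 0 + v 1 + v 2 + v 3 + v 4 + v 5 + v 6 + v 7 + v 8 + v 9 := fun v => by
    rw [Fin.sum_univ_castSucc, Fin.sum_univ_castSucc, Fin.sum_univ_eight]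
    rfl
  exact hfin g

theorem exp_pi_div_six_mul_I : exp ((π / 6 : ℝ) * I) = (√3 + I) / 2 := by
  rw [exp_ofReal_mul_I, Real.cos_pi_div_six, Real.sin_pi_div_six]
  push_cast
  ring

theorem exp_five_pi_div_six_mul_I : exp ((5 * π / 6 : ℝ) * I) = (-√3 + I) / 2 := by
  rw [exp_ofReal_mul_I, show 5 * π / 6 = π - π / 6 by ring, Real.cos_pi_sub, Real.sin_pi_sub,
    Real.cos_pi_div_six, Real.sin_pi_div_six]
  push_cast
  ring

theorem exp_two_pi_div_three_mul_I : exp ((2 * π / 3 : ℝ) * I) = (-1 + √3 * I) / 2 := by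
  rw [exp_ofReal_mul_I, show 2 * π / 3 = π - π / 3 by ring, Real.cos_pi_sub, Real.sin_pi_sub,
    Real.cos_pi_div_three, Real.sin_pi_div_three]
  push_cast
  ring

theorem autocorrelation_eq_zero_of_sq_eq_three {s : ℝ} (hs : (s : ℂ) ^ 2 = 3) (f : ZMod 10 → ℂ)
    (h0 : f 0 = 1) (h1 : f 1 = (-s + I) / 2) (h2 : f 2 = (-1 + s * I) / 2)
    (h3 : f 3 = (-s + I) / 2) (h4 : f 4 = 1) (h7 : f 7 = (s + I) / 2)
    (hS : ∀ x : ZMod 10, x ∉ ({0, 1, 2, 3, 4, 7} : Finset (ZMod 10)) → f x = 0)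
    {d : ZMod 10} (hd : d ≠ 0) :
    ∑ x : ZMod 10, f x * conj (f (x - d)) = 0 := by
  obtain ⟨h5, h6, h8, h9⟩ : f 5 = 0 ∧ f 6 = 0 ∧ f 8 = 0 ∧ f 9 = 0 :=
    ⟨hS 5 (by decide), hS 6 (by decide), hS 8 (by decide), hS 9 (by decide)⟩
  obtain rfl | rfl | rfl | rfl | rfl | rfl | rfl | rfl | rfl :
      d = 1 ∨ d = 2 ∨ d = 3 ∨ d = 4 ∨ d = 5 ∨ d = 6 ∨ d = 7 ∨ d = 8 ∨ d = 9 := by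
    revert d; decide
  all_goals
    rw [ZMod.sum_univ_ten]
    reduce_mod_char
    simp only [h0, h1, h2, h3, h4, h5, h6, h7, h8, h9, map_zero, map_one, map_div₀, map_add,
      map_neg, map_mul, conj_ofReal, conj_I, map_ofNat]
    grind [I_sq]

theorem extreme_012347_zmod10 :
    ∀ f : ZMod 10 → ℂ,
      f 0 = 1 → f 1 = Complex.exp ((5 * Real.pi / 6 : ℝ) * Complex.I) →
      f 2 = Complex.exp ((2 * Real.pi / 3 : ℝ) * Complex.I) →
      f 3 = Complex.exp ((5 * Real.pi / 6 : ℝ) * Complex.I) →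
      f 4 = 1 → f 7 = Complex.exp ((Real.pi / 6 : ℝ) * Complex.I) →
      (∀ x : ZMod 10, x ∉ ({0, 1, 2, 3, 4, 7} : Finset (ZMod 10)) → f x = 0) →
      ∀ d : ZMod 10, d ≠ 0 →
        ∑ x : ZMod 10, f x * (starRingEnd ℂ) (f (x - d)) = 0 := by
  intro f h0 h1 h2 h3 h4 h7 hS d hd
  rw [exp_five_pi_div_six_mul_I] at h1 h3
  rw [exp_two_pi_div_three_mul_I] at h2
  rw [exp_pi_div_six_mul_I] at h7
  have hs : ((√3 : ℝ) : ℂ) ^ 2 = 3 := by norm_cast; simp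
  exact autocorrelation_eq_zero_of_sq_eq_three hs f h0 h1 h2 h3 h4 h7 hS hd
end

section
/- The 5-element set {(0,0,0), (0,0,1), (0,1,0), (0,1,1), (1,0,0)} is extreme in (ZMod 2)³: the function f with values 1, −1, −1, −1, i at these points respectively (and 0 elsewhere) satisfies ∑_x f(x)·conj(f(x−d)) = 0 for every nonzero d ∈ (ZMod 2)³. -/
open Complex Finset

open ComplexConjugate

/-!
On `ZMod 2 × G` a function is a pair of layers `u, v : G → ℂ`; the autocorrelation at `(0, d)`
is the sum of the autocorrelations of the layers, and at `(1, d)` the sum of their two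
cross-correlations. Here `G = (ZMod 2)²`, the lower layer is the function `g` equal to `1` at `0`
and `-1` elsewhere, whose autocorrelation off `0` is `|G| - 4 = 0`, and the upper layer is `I`
at `0`. The cross terms are `g d * conj I + I * conj (g (-d))`, which cancel because `g` is real
and even.
-/

lemma ZMod.sum_univ_two {M : Type*} [AddCommMonoid M] (φ : ZMod 2 → M) :
    ∑ a, φ a = φ 0 + φ 1 :=
  Fin.sum_univ_two φ

lemma ZMod.eq_zero_or_eq_one_of_two (a : ZMod 2) : a = 0 ∨ a = 1 := by
  decide +revert

section Correlation

variable {G : Type*} [AddCommGroup G] [Fintype G]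

def crossCorr (f g : G → ℂ) (d : G) : ℂ := ∑ x, f x * conj (g (x - d))

lemma crossCorr_add_left (f₁ f₂ g : G → ℂ) (d : G) :
    crossCorr (f₁ + f₂) g d = crossCorr f₁ g d + crossCorr f₂ g d := by
  simp only [crossCorr, Pi.add_apply, add_mul, sum_add_distrib]

lemma crossCorr_add_right (f g₁ g₂ : G → ℂ) (d : G) :
    crossCorr f (g₁ + g₂) d = crossCorr f g₁ d + crossCorr f g₂ d := by
  simp only [crossCorr, Pi.add_apply, map_add, mul_add, sum_add_distrib]

lemma crossCorr_const_const (a b : ℂ) (d : G) :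
    crossCorr (fun _ ↦ a) (fun _ ↦ b) d = Fintype.card G * (a * conj b) := by
  simp [crossCorr]

variable [DecidableEq G]

lemma crossCorr_single_right (f : G → ℂ) (c : ℂ) (d : G) :
    crossCorr f (Pi.single 0 c) d = f d * conj c := by
  rw [crossCorr, Fintype.sum_eq_single d]
  · simp
  · intro x hx
    simp [sub_eq_zero, hx]

lemma crossCorr_single_left (f : G → ℂ) (c : ℂ) (d : G) :
    crossCorr (Pi.single 0 c) f d = c * conj (f (-d)) := by
  rw [crossCorr, Fintype.sum_eq_single 0]
  · simp
  · intro x hx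
    simp [hx]

lemma crossCorr_neg_one_add_single_two {d : G} (hd : d ≠ 0) :
    crossCorr ((fun _ ↦ -1) + Pi.single 0 2) ((fun _ ↦ -1) + Pi.single 0 2) d =
      Fintype.card G - 4 := by
  simp only [crossCorr_add_left, crossCorr_add_right, crossCorr_const_const,
    crossCorr_single_left, crossCorr_single_right, Pi.add_apply, Pi.single_apply, hd,
    if_false, map_neg, map_one, map_ofNat]
  ring

end Correlation

section Stack

variable {G : Type*} [AddCommGroup G] [Fintype G]

def stack (u v : G → ℂ) : ZMod 2 × G → ℂ := fun p ↦ if p.1 = 0 then u p.2 else v p.2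

lemma crossCorr_stack_zero (u v : G → ℂ) (d : G) :
    crossCorr (stack u v) (stack u v) (0, d) = crossCorr u u d + crossCorr v v d := by
  simp only [crossCorr, Fintype.sum_prod_type, ZMod.sum_univ_two, stack]
  simp

lemma crossCorr_stack_one (u v : G → ℂ) (d : G) :
    crossCorr (stack u v) (stack u v) (1, d) = crossCorr u v d + crossCorr v u d := by
  simp only [crossCorr, Fintype.sum_prod_type, ZMod.sum_univ_two, stack]
  simp

lemma crossCorr_stack_single_I_eq_zero [DecidableEq G] {g : G → ℂ}
    (hg : ∀ d ≠ 0, crossCorr g g d = 0) (hreal : ∀ x, conj (g x) = g x)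
    (heven : ∀ x, g (-x) = g x) {d : ZMod 2 × G} (hd : d ≠ 0) :
    crossCorr (stack g (Pi.single 0 I)) (stack g (Pi.single 0 I)) d = 0 := by
  obtain ⟨a, d⟩ := d
  obtain rfl | rfl := ZMod.eq_zero_or_eq_one_of_two a
  · have hd : d ≠ 0 := fun h ↦ hd (by rw [h]; rfl)
    rw [crossCorr_stack_zero, crossCorr_single_right, hg d hd, Pi.single_eq_of_ne hd]
    simp
  · rw [crossCorr_stack_one, crossCorr_single_right, crossCorr_single_left, heven, hreal,
      conj_I]
    ring

end Stack

theorem extreme_five_set_zmod2_cubed :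
    ∀ f : ZMod 2 × ZMod 2 × ZMod 2 → ℂ,
      f (0, 0, 0) = 1 → f (0, 0, 1) = -1 → f (0, 1, 0) = -1 →
      f (0, 1, 1) = -1 → f (1, 0, 0) = Complex.I →
      (∀ x : ZMod 2 × ZMod 2 × ZMod 2,
        x ∉ ({(0, 0, 0), (0, 0, 1), (0, 1, 0), (0, 1, 1), (1, 0, 0)} :
          Finset (ZMod 2 × ZMod 2 × ZMod 2)) → f x = 0) →
      ∀ d : ZMod 2 × ZMod 2 × ZMod 2, d ≠ 0 →
        ∑ x : ZMod 2 × ZMod 2 × ZMod 2,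
          f x * (starRingEnd ℂ) (f (x - d)) = 0 := by
  intro f h000 h001 h010 h011 h100 hsupp d hd
  set g : ZMod 2 × ZMod 2 → ℂ := (fun _ ↦ -1) + Pi.single 0 2
  have hf : f = stack g (Pi.single 0 I) := by
    ext ⟨a, b, c⟩
    obtain rfl | rfl := ZMod.eq_zero_or_eq_one_of_two a <;>
    obtain rfl | rfl := ZMod.eq_zero_or_eq_one_of_two b <;>
    obtain rfl | rfl := ZMod.eq_zero_or_eq_one_of_two c <;>
    norm_num [stack, g, Pi.single_apply, Prod.mk_eq_zero, h000, h001, h010, h011, h100] <;>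
    exact hsupp _ (by decide)
  have hg : ∀ d ≠ 0, crossCorr g g d = 0 := fun d hd ↦ by
    simp [g, crossCorr_neg_one_add_single_two hd]
  have hreal : ∀ x, conj (g x) = g x := fun x ↦ by
    by_cases hx : x = 0 <;> simp [g, hx, map_ofNat]
  have heven : ∀ x, g (-x) = g x := fun x ↦ by simp [g, Pi.single_apply]
  rw [hf]
  exact crossCorr_stack_single_I_eq_zero hg hreal heven hd
end
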